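/- Let G be a group with an Abelian subgroup H of index 2, G = ⟨H, b⟩, and K a commutative ring. Define σ: G → G by σ(b) = b, σ(h) = b⁻¹hb for h ∈ H (an anti-automorphism of order 2, assuming bhb⁻¹ = b⁻¹hb for all h ∈ H), and f: G → U(K) by f(h) = 1 for h ∈ H and f(b) = -1. Then the group ring KG satisfies xx^σ = x^σx for all x ∈ KG, where x^σ = Σ α_g f(g)σ(g). -/

import Mathlib

noncomputable def sigmaMap {K G : Type*} [CommRing K] [Group G] (σ : G → G) (f : G →* Kˣ)
    (x : MonoidAlgebra K G) : MonoidAlgebra K G :=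
  Finsupp.sum x.coeff fun g a => MonoidAlgebra.single (σ g) (a * (f g : K))

/-!
On `H` the map `σ` is conjugation by `b` and `f = 1`; on the other coset `Hb` one finds
`σ w = w` and `f w = -1`. Both sides of `x x^σ = x^σ x` are quadratic in `x`, so it suffices to
compare the diagonal terms `g·g^σ`, `g^σ·g` and the symmetrised cross terms of pairs of group
elements. For `g ∈ H` and `w ∉ H` the cross terms cancel on each side separately, because
`w * σ g = g * w` and `σ g * w = w * g`: as `w * b⁻¹ ∈ H` commutes with `g`, the element `w`
conjugates `g` exactly as `b` does.
-/

open MonoidAlgebra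

section IndexTwo

variable {G : Type*} [Group G] {H : Subgroup G} {b : G}

theorem Subgroup.notMem_of_sup_closure_singleton_eq_top (hH : H ≠ ⊤)
    (hgen : H ⊔ Subgroup.closure {b} = ⊤) : b ∉ H := by
  intro hb
  rw [sup_eq_left.mpr ((Subgroup.closure_le H).mpr (Set.singleton_subset_iff.mpr hb))] at hgen
  exact hH hgen

theorem Subgroup.mul_inv_mem_of_notMem_of_index_two (hind : H.index = 2) {w : G} (hw : w ∉ H)
    (hb : b ∉ H) : w * b⁻¹ ∈ H := by
  simp [Subgroup.mul_mem_iff_of_index_two hind, hw, hb]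

theorem MonoidHom.apply_eq_of_notMem_of_index_two {M : Type*} [Monoid M] (f : G →* M)
    (hf : ∀ h ∈ H, f h = 1) (hind : H.index = 2) (hb : b ∉ H) {w : G} (hw : w ∉ H) :
    f w = f b := by
  rw [← inv_mul_cancel_right w b, map_mul, hf _ (H.mul_inv_mem_of_notMem_of_index_two hind hw hb),
    one_mul]

theorem mul_conj_eq_of_index_two (hcomm : ∀ x ∈ H, ∀ y ∈ H, x * y = y * x)
    (hind : H.index = 2) (hb : b ∉ H) {g w : G} (hg : g ∈ H) (hw : w ∉ H) :
    w * (b⁻¹ * g * b) = g * w := by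
  have hwb := H.mul_inv_mem_of_notMem_of_index_two hind hw hb
  calc w * (b⁻¹ * g * b) = (w * b⁻¹) * g * b := by group
    _ = g * (w * b⁻¹) * b := by rw [hcomm _ hwb g hg]
    _ = g * w := by group

theorem conj_mul_eq_of_index_two (hcomm : ∀ x ∈ H, ∀ y ∈ H, x * y = y * x)
    (hind : H.index = 2) (hb : b ∉ H) {g w : G} (hg : g ∈ H) (hw : w ∉ H) :
    b⁻¹ * g * b * w = w * g := by
  have := mul_conj_eq_of_index_two hcomm hind hb hg (inv_mem_iff.not.mpr hw)
  rw [inv_mul_eq_iff_eq_mul] at this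
  rw [this]
  group

theorem apply_eq_self_of_notMem_of_index_two {σ : G → G} (hind : H.index = 2) (hb : b ∉ H)
    (hanti : ∀ g h : G, σ (g * h) = σ h * σ g) (hσb : σ b = b)
    (hσH : ∀ h ∈ H, σ h = b⁻¹ * h * b) {w : G} (hw : w ∉ H) : σ w = w := by
  rw [← inv_mul_cancel_right w b, hanti, hσb,
    hσH _ (H.mul_inv_mem_of_notMem_of_index_two hind hw hb)]
  group

end IndexTwo

namespace MonoidAlgebra

variable {k M : Type*} [Semiring k] [Monoid M]

theorem commute_apply_self_of_single (τ : k[M] →+ k[M])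
    (hcross : ∀ m n r s, single m r * τ (single n s) + single n s * τ (single m r) =
      τ (single m r) * single n s + τ (single n s) * single m r)
    (hself : ∀ m r, Commute (single m r) (τ (single m r))) (x : k[M]) : Commute x (τ x) := by
  have cross : ∀ x y, x * τ y + y * τ x = τ x * y + τ y * x := by
    intro x y
    induction x using induction_linear with
    | zero => simp
    | add x x' hx hx' =>
      simp only [map_add, add_mul, mul_add]
      calc _ = (x * τ y + y * τ x) + (x' * τ y + y * τ x') := by abel
        _ = _ := by rw [hx, hx']; abel
    | single m r =>
      induction y using induction_linear with
      | zero => simp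
      | add y y' hy hy' =>
        simp only [map_add, add_mul, mul_add]
        calc _ = (single m r * τ y + y * τ (single m r)) +
              (single m r * τ y' + y' * τ (single m r)) := by abel
          _ = _ := by rw [hy, hy']; abel
      | single n s => exact hcross m n r s
  induction x using induction_linear with
  | zero => simp
  | add x x' hx hx' =>
    simp only [Commute, SemiconjBy, map_add, add_mul, mul_add]
    calc _ = x * τ x + x' * τ x' + (x * τ x' + x' * τ x) := by abel
      _ = _ := by rw [hx.eq, hx'.eq, cross]; abel
  | single m r => exact hself m r

end MonoidAlgebra

section SigmaMap

variable {K G : Type*} [CommRing K] [Group G] (σ : G → G) (f : G →* Kˣ)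

theorem sigmaMap_single (g : G) (a : K) : sigmaMap σ f (single g a) = single (σ g) (a * f g) := by
  simp [sigmaMap, Finsupp.sum_single_index]

theorem sigmaMap_add (x y : K[G]) : sigmaMap σ f (x + y) = sigmaMap σ f x + sigmaMap σ f y := by
  simp [sigmaMap, coeff_add, Finsupp.sum_add_index', add_mul, single_add]

variable {H : Subgroup G} {b : G} {σ f}

theorem commute_single_sigmaMap_single (hcomm : ∀ x ∈ H, ∀ y ∈ H, x * y = y * x)
    (hind : H.index = 2) (hσH : ∀ h ∈ H, σ h = b⁻¹ * h * b)
    (hσout : ∀ w ∉ H, σ w = w) (g : G) (a : K) :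
    Commute (single g a) (sigmaMap σ f (single g a)) := by
  have hg : g * σ g = σ g * g := by
    by_cases hg : g ∈ H
    · rw [hσH g hg]
      exact hcomm _ hg _ ((Subgroup.normal_of_index_eq_two hind).conj_mem' g hg b)
    · rw [hσout g hg]
  simp only [Commute, SemiconjBy, sigmaMap_single, single_mul_single, hg]
  ring_nf

theorem single_mul_sigmaMap_single_add_comm (hcomm : ∀ x ∈ H, ∀ y ∈ H, x * y = y * x)
    (hind : H.index = 2) (hb : b ∉ H) (hσH : ∀ h ∈ H, σ h = b⁻¹ * h * b)
    (hσout : ∀ w ∉ H, σ w = w) (hfH : ∀ h ∈ H, f h = 1) (hfout : ∀ w ∉ H, f w = -1)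
    (g h : G) (a c : K) :
    single g a * sigmaMap σ f (single h c) + single h c * sigmaMap σ f (single g a) =
      sigmaMap σ f (single g a) * single h c + sigmaMap σ f (single h c) * single g a := by
  wlog hgh : g ∈ H ∨ h ∉ H generalizing g h a c
  · rw [add_comm, this h g c a (by tauto), add_comm]
  simp only [sigmaMap_single, single_mul_single]
  by_cases hh : h ∈ H
  · have hg : g ∈ H := hgh.resolve_right (not_not.mpr hh)
    have hσ : ∀ x ∈ H, σ x ∈ H := fun x hx =>
      hσH x hx ▸ (Subgroup.normal_of_index_eq_two hind).conj_mem' x hx b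
    rw [hfH g hg, hfH h hh, hcomm g hg _ (hσ h hh), hcomm h hh _ (hσ g hg), add_comm]
    ring_nf
  rw [hσout h hh, hfout h hh]
  by_cases hg : g ∈ H
  · rw [hfH g hg, hσH g hg, mul_conj_eq_of_index_two hcomm hind hb hg hh,
      conj_mul_eq_of_index_two hcomm hind hb hg hh]
    simp [single_neg, mul_comm a c]
  · rw [hσout g hg, hfout g hg]
    ring_nf

end SigmaMap

theorem stmt_12_general {K G : Type*} [CommRing K] [Group G] (H : Subgroup G) (b : G)
    (hHab : ∀ x ∈ H, ∀ y ∈ H, x * y = y * x)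
    (hind : H.index = 2)
    (hgen : H ⊔ Subgroup.closure {b} = ⊤)
    (σ : G → G)
    (hanti : ∀ g h : G, σ (g * h) = σ h * σ g)
    (hσb : σ b = b)
    (hσH : ∀ h ∈ H, σ h = b⁻¹ * h * b)
    (f : G →* Kˣ)
    (hfH : ∀ h ∈ H, f h = 1) (hfb : f b = -1) :
    ∀ x : MonoidAlgebra K G, x * sigmaMap σ f x = sigmaMap σ f x * x := by
  have hb : b ∉ H := H.notMem_of_sup_closure_singleton_eq_top
    (fun h => by simp [h] at hind) hgen
  have hσout : ∀ w ∉ H, σ w = w := fun w hw =>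
    apply_eq_self_of_notMem_of_index_two hind hb hanti hσb hσH hw
  have hfout : ∀ w ∉ H, f w = -1 := fun w hw =>
    hfb ▸ f.apply_eq_of_notMem_of_index_two hfH hind hb hw
  intro x
  exact (commute_apply_self_of_single (AddMonoidHom.mk' (sigmaMap σ f) (sigmaMap_add σ f))
    (single_mul_sigmaMap_single_add_comm hHab hind hb hσH hσout hfH hfout)
    (commute_single_sigmaMap_single hHab hind hσH hσout) x).eq

theorem stmt_12 {K G : Type*} [CommRing K] [Group G] (H : Subgroup G) (b : G)
    (hHab : ∀ x ∈ H, ∀ y ∈ H, x * y = y * x)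
    (hind : H.index = 2)
    (hgen : H ⊔ Subgroup.closure {b} = ⊤)
    (hconj : ∀ h ∈ H, b * h * b⁻¹ = b⁻¹ * h * b)
    (σ : G → G)
    (hanti : ∀ g h : G, σ (g * h) = σ h * σ g)
    (hσb : σ b = b)
    (hσH : ∀ h ∈ H, σ h = b⁻¹ * h * b)
    (f : G →* Kˣ)
    (hfH : ∀ h ∈ H, f h = 1) (hfb : f b = -1) :
    ∀ x : MonoidAlgebra K G, x * sigmaMap σ f x = sigmaMap σ f x * x :=
  stmt_12_general H b hHab hind hgen σ hanti hσb hσH f hfH hfb
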